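/- arXiv:2510.23298 — 2 statements merged into one kernel-verified Lean document; each statement's English description precedes it below -/
import Mathlib

section
/- Let p > 13 be prime. The truncated Franel polynomial H = Σ_{n=0}^{p-1} F_n xⁿ ∈ F_p[x] has a root in the algebraic closure of F_p different from 0, -1, and 1/8. -/
/-! If every root of `H` in the algebraic closure `K` of `𝔽_p` other than `0` and `-1` were
`1/8`, then, since `H(0) = F_0 = 1`, `H` would split as `c (X + 1)^a (X - 1/8)^b`, and its
logarithmic derivative would give `H' (X + 1) (X - 1/8) = H (a (X - 1/8) + b (X + 1))`. The
coefficients of `1, X, X²` of this identity, computed from `F_0, …, F_3 = 1, 2, 10, 56`, are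
three linear equations in `a` and `b` whose only consistency condition is `12 = 0` in `K`, which
fails for `p > 3`. -/
open Polynomial Finset

def franel (n : ℕ) : ℕ := ∑ k ∈ range (n + 1), n.choose k ^ 3

theorem CharP.natCast_ne_zero_of_pos_of_lt {R : Type*} [AddMonoidWithOne R] (p : ℕ) [CharP R p]
    {n : ℕ} (h0 : 0 < n) (hn : n < p) : (n : R) ≠ 0 := by
  rw [Ne, CharP.cast_eq_zero_iff R p]
  exact fun h => (Nat.le_of_dvd h0 h).not_gt hn

theorem Polynomial.coeff_sum_range_C_mul_X_pow {R : Type*} [Semiring R] (a : ℕ → R) {N m : ℕ}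
    (hm : m < N) : (∑ n ∈ range N, C (a n) * X ^ n).coeff m = a m := by
  simp [hm]

theorem coeff_sum_range_franel {R : Type*} [Semiring R] {N k : ℕ} (hk : k < N) :
    (∑ n ∈ range N, C (∑ j ∈ range (n + 1), (n.choose j : R) ^ 3) * X ^ n).coeff k =
      (franel k : R) := by
  rw [coeff_sum_range_C_mul_X_pow _ hk]
  simp [franel]

theorem Polynomial.eq_C_mul_X_sub_C_pow_mul_X_sub_C_pow_of_roots {R : Type*} [CommRing R]
    [IsDomain R] [DecidableEq R] {f : R[X]} (hf : f.Splits) {r s : R} (hrs : r ≠ s)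
    (hroots : ∀ x ∈ f.roots, x = r ∨ x = s) :
    f = C f.leadingCoeff * ((X - C r) ^ f.roots.count r * (X - C s) ^ f.roots.count s) := by
  have hsplit : f.roots = .replicate (f.roots.count r) r + .replicate (f.roots.count s) s := by
    conv_lhs => rw [← Multiset.filter_add_not (· = r) f.roots]
    rw [Multiset.filter_eq', ← Multiset.filter_eq' f.roots s]
    congr 1
    refine Multiset.filter_congr fun x hx => ?_
    rcases hroots x hx with rfl | rfl <;> simp [hrs, hrs.symm]
  conv_lhs => rw [hf.eq_prod_roots, hsplit]
  simp only [Multiset.map_add, Multiset.map_replicate, Multiset.prod_add, Multiset.prod_replicate]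

theorem Polynomial.derivative_mul_eq_of_eq_C_mul_X_sub_C_pow_mul_X_sub_C_pow {R : Type*}
    [CommRing R] {f : R[X]} {a r s : R} {m n : ℕ}
    (hf : f = C a * ((X - C r) ^ m * (X - C s) ^ n)) :
    derivative f * ((X - C r) * (X - C s)) =
      f * (C (m : R) * (X - C s) + C (n : R) * (X - C r)) := by
  subst hf
  have pow_pred_mul (k : ℕ) (g : R[X]) : C (k : R) * g ^ (k - 1) * g = C (k : R) * g ^ k := by
    cases k with
    | zero => simp
    | succ k => rw [Nat.add_sub_cancel, pow_succ, mul_assoc]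
  simp only [derivative_mul, derivative_C, zero_mul, zero_add, derivative_pow, derivative_X_sub_C]
  linear_combination (C a * (X - C s) ^ n * (X - C s)) * pow_pred_mul m (X - C r) +
    (C a * (X - C r) ^ m * (X - C r)) * pow_pred_mul n (X - C s)

theorem twelve_eq_zero_of_derivative_mul_eq {R : Type*} [CommRing R] {f : R[X]}
    (h0 : f.coeff 0 = 1) (h1 : f.coeff 1 = 2) (h2 : f.coeff 2 = 10) (h3 : f.coeff 3 = 56)
    {u m n : R} (hu : 8 * u = 1)
    (h : derivative f * ((X - C (-1)) * (X - C u)) =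
      f * (C m * (X - C u) + C n * (X - C (-1)))) :
    (12 : R) = 0 := by
  have coeff_eq (k : ℕ) := congrArg (coeff · k) h
  have e0 : -2 * u = n - m * u := by
    have := coeff_eq 0
    norm_num [coeff_mul, coeff_derivative, mul_add, add_mul, mul_sub, coeff_X, coeff_C,
      h0, h1, h2, h3] at this
    linear_combination this
  have e1 : 2 - 22 * u = (m + n) + 2 * (n - m * u) := by
    have := coeff_eq 1
    norm_num [coeff_mul, Finset.Nat.sum_antidiagonal_succ, coeff_derivative, mul_add, add_mul,
      mul_sub, coeff_X, coeff_C, h0, h1, h2, h3] at this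
    linear_combination this
  have e2 : 22 - 188 * u = 2 * (m + n) + 10 * (n - m * u) := by
    have := coeff_eq 2
    norm_num [coeff_mul, Finset.Nat.sum_antidiagonal_succ, coeff_derivative, mul_add, add_mul,
      mul_sub, coeff_X, coeff_C, h0, h1, h2, h3] at this
    linear_combination this
  linear_combination (-48 : R) * e0 + (-16 : R) * e1 + (8 : R) * e2 + 132 * hu

open Polynomial in
theorem franel_truncation_has_other_root (p : ℕ) [Fact (Nat.Prime p)] (hp13 : 13 < p) :
    let H : Polynomial (ZMod p) :=
      ∑ n ∈ Finset.range p,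
        C (∑ k ∈ Finset.range (n + 1), ((n.choose k : ZMod p)) ^ 3) * X ^ n
    ∃ r : AlgebraicClosure (ZMod p),
      Polynomial.aeval r H = 0 ∧ r ≠ 0 ∧ r ≠ -1 ∧ r ≠ (8 : AlgebraicClosure (ZMod p))⁻¹ := by
  intro H
  classical
  by_contra! hcon
  set K := AlgebraicClosure (ZMod p)
  have cast_ne_zero (n : ℕ) (h0 : 0 < n) (hn : n < p) : (n : K) ≠ 0 :=
    CharP.natCast_ne_zero_of_pos_of_lt p h0 hn
  have hu : (8 : K) * 8⁻¹ = 1 :=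
    mul_inv_cancel₀ (mod_cast cast_ne_zero 8 (by omega) (by omega))
  set Q : K[X] := H.map (algebraMap (ZMod p) K)
  have hQ (k : ℕ) (hk : k < p) (v : ℕ) (hv : franel k = v) : Q.coeff k = v := by
    rw [coeff_map, coeff_sum_range_franel hk, map_natCast, hv]
  have hQ0 : Q.coeff 0 = 1 := mod_cast hQ 0 (by omega) 1 rfl
  have hroots (x : K) (hx : x ∈ Q.roots) : x = -1 ∨ x = 8⁻¹ := by
    have hQx : Q.eval x = 0 := (mem_roots'.mp hx).2
    have hx0 : x ≠ 0 := by
      rintro rfl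
      rw [← coeff_zero_eq_eval_zero, hQ0] at hQx
      exact one_ne_zero hQx
    by_cases hx1 : x = -1
    exacts [.inl hx1, .inr (hcon x (by rwa [← eval_map_algebraMap]) hx0 hx1)]
  have hne : (-1 : K) ≠ 8⁻¹ := fun h => cast_ne_zero 9 (by omega) (by omega) <| by
    push_cast; linear_combination -hu - 8 * h
  have h12 := twelve_eq_zero_of_derivative_mul_eq hQ0 (mod_cast hQ 1 (by omega) 2 rfl)
    (mod_cast hQ 2 (by omega) 10 rfl) (mod_cast hQ 3 (by omega) 56 rfl) hu
    (derivative_mul_eq_of_eq_C_mul_X_sub_C_pow_mul_X_sub_C_pow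
      (eq_C_mul_X_sub_C_pow_mul_X_sub_C_pow_of_roots (IsAlgClosed.splits Q) hne hroots))
  exact cast_ne_zero 12 (by omega) (by omega) (mod_cast h12)
end

section
/- For every prime p and integers n, ℓ with 0 ≤ ℓ < p, the central Delannoy-style sums a_n(4,0) = Σ_{k=0}^n C(n,k)⁴ satisfy the Lucas congruence a_{np+ℓ}(4,0) ≡ a_n(4,0) · a_ℓ(4,0) (mod p). -/
/-!
By Lucas's theorem, `C(np + ℓ, qp + r) ≡ C(n, q) C(ℓ, r) (mod p)` for `ℓ, r < p`. Splitting every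
index `k < (n + 1)p` as `k = qp + r` with `r < p`, the sum `∑ₖ C(np + ℓ, k)ᵉ` therefore factors mod `p`
as `(∑_q C(n, q)ᵉ) (∑_{r < p} C(ℓ, r)ᵉ)`; the terms with `k > np + ℓ` or `r > ℓ` vanish as `e ≠ 0`.
-/

/-- The generalized Apéry numbers `a_m(4,0) = ∑_{k=0}^m C(m,k)⁴`. -/
def aFourZero (m : ℕ) : ℕ := ∑ k ∈ Finset.range (m + 1), (m.choose k) ^ 4

open Finset

theorem Finset.sum_range_mul_eq_sum_sum {M : Type*} [AddCommMonoid M] (f : ℕ → M) (m p : ℕ) :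
    ∑ k ∈ range (m * p), f k = ∑ q ∈ range m, ∑ r ∈ range p, f (q * p + r) := by
  induction m with
  | zero => simp
  | succ m ih => rw [Nat.succ_mul, sum_range_add, ih, sum_range_succ]

theorem Nat.sum_range_choose_pow_of_lt {R : Type*} [Semiring R] {e : ℕ} (he : e ≠ 0)
    {m N : ℕ} (h : m < N) :
    ∑ k ∈ range (m + 1), (m.choose k : R) ^ e = ∑ k ∈ range N, (m.choose k : R) ^ e := by
  refine sum_subset (range_subset_range.2 h) fun k _ hk => ?_
  rw [mem_range, not_lt] at hk
  rw [Nat.choose_eq_zero_of_lt hk, Nat.cast_zero, zero_pow he]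

theorem ZMod.natCast_choose_mul_add_mul_add {p : ℕ} [Fact p.Prime] {n ℓ q r : ℕ}
    (hℓ : ℓ < p) (hr : r < p) :
    ((n * p + ℓ).choose (q * p + r) : ZMod p) = n.choose q * ℓ.choose r := by
  have hdiv : ∀ {a b : ℕ}, b < p → (a * p + b) / p = a := fun hb => by
    rw [Nat.add_comm, Nat.add_mul_div_right _ _ hb.pos, Nat.div_eq_of_lt hb, Nat.zero_add]
  have hmod : ∀ {a b : ℕ}, b < p → (a * p + b) % p = b := fun hb => by
    rw [Nat.mul_add_mod_self_right, Nat.mod_eq_of_lt hb]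
  have h_lucas := (ZMod.intCast_eq_intCast_iff _ _ _).2
    (Choose.choose_modEq_choose_mod_mul_choose_div (n := n * p + ℓ) (k := q * p + r) (p := p))
  rw [hmod hℓ, hmod hr, hdiv hℓ, hdiv hr] at h_lucas
  push_cast at h_lucas
  rw [h_lucas, mul_comm]

theorem ZMod.sum_range_choose_pow_mul_add {p : ℕ} [Fact p.Prime] {e : ℕ} (he : e ≠ 0)
    (n : ℕ) {ℓ : ℕ} (hℓ : ℓ < p) :
    ∑ k ∈ range (n * p + ℓ + 1), ((n * p + ℓ).choose k : ZMod p) ^ e =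
      (∑ q ∈ range (n + 1), (n.choose q : ZMod p) ^ e) *
        ∑ r ∈ range (ℓ + 1), (ℓ.choose r : ZMod p) ^ e := by
  rw [Nat.sum_range_choose_pow_of_lt he (N := (n + 1) * p) (by nlinarith),
    Nat.sum_range_choose_pow_of_lt he hℓ, sum_range_mul_eq_sum_sum, sum_mul_sum]
  refine sum_congr rfl fun q _ => sum_congr rfl fun r hr => ?_
  rw [ZMod.natCast_choose_mul_add_mul_add hℓ (mem_range.1 hr), mul_pow]

theorem aFourZero_lucas (p : ℕ) (hp : p.Prime) (n ℓ : ℕ) (hℓ : ℓ < p) :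
    (aFourZero (n * p + ℓ) : ZMod p) = (aFourZero n : ZMod p) * (aFourZero ℓ : ZMod p) := by
  have : Fact p.Prime := ⟨hp⟩
  push_cast [aFourZero]
  exact ZMod.sum_range_choose_pow_mul_add four_ne_zero n hℓ
end
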